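/- Consider a deterministic system with state space S, action space A, transition function T : S × A → S, bounded reward r : S × A → ℝ, discount factor γ ∈ (0,1), and bounded potential Φ : S → ℝ. For an initial state x and an action sequence a : ℕ → A, let x_0 = x, x_{t+1} = T(x_t, a_t), and define the return G(x, a) = ∑_{t=0}^∞ γ^t · r(x_t, a_t) and the shaped return G'(x, a) = ∑_{t=0}^∞ γ^t · (r(x_t, a_t) + γ·Φ(x_{t+1}) − Φ(x_t)). Define the optimal values V(x) = ⨆_{a : ℕ → A} G(x, a) and V'(x) = ⨆_{a : ℕ → A} G'(x, a). Then for every state x, V'(x) = V(x) − Φ(x). -/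

import Mathlib

/-!
Writing `g t = γ ^ t * Φ (x t)`, the discounted shaping term `γ ^ t * (γ * Φ (x (t+1)) - Φ (x t))`
is `g (t + 1) - g t`. Since `Φ` is bounded, `g` is summable and these differences sum to
`-g 0 = -Φ x`, so every shaped return is the plain return minus `Φ x`. Returns are bounded
above by `C / (1 - γ)`, hence subtracting the constant commutes with the supremum.
-/

/-- Trajectory of a deterministic system from initial state `x` under the
action sequence `a`: `traj T x a 0 = x`, `traj T x a (t+1) = T (traj T x a t, a t)`. -/
def traj {S A : Type*} (T : S × A → S) (x : S) (a : ℕ → A) : ℕ → S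
  | 0 => x
  | t + 1 => T (traj T x a t, a t)

section Discounted

variable {γ C : ℝ}

theorem summable_pow_mul_of_abs_le (hγ0 : 0 ≤ γ) (hγ1 : γ < 1) {f : ℕ → ℝ}
    (hf : ∀ t, |f t| ≤ C) : Summable fun t => γ ^ t * f t :=
  ((summable_geometric_of_lt_one hγ0 hγ1).mul_right C).of_norm_bounded fun t => by
    rw [Real.norm_eq_abs, abs_mul, abs_pow, abs_of_nonneg hγ0]
    exact mul_le_mul_of_nonneg_left (hf t) (pow_nonneg hγ0 t)

theorem tsum_pow_mul_le_of_abs_le (hγ0 : 0 ≤ γ) (hγ1 : γ < 1) {f : ℕ → ℝ}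
    (hf : ∀ t, |f t| ≤ C) : ∑' t, γ ^ t * f t ≤ C / (1 - γ) :=
  calc ∑' t, γ ^ t * f t
      ≤ ∑' t, γ ^ t * C :=
        (summable_pow_mul_of_abs_le hγ0 hγ1 hf).tsum_le_tsum
          (fun t => mul_le_mul_of_nonneg_left (le_of_abs_le (hf t)) (pow_nonneg hγ0 t))
          ((summable_geometric_of_lt_one hγ0 hγ1).mul_right C)
    _ = C / (1 - γ) := by
        rw [tsum_mul_right, tsum_geometric_of_lt_one hγ0 hγ1, div_eq_inv_mul]

theorem tsum_pow_mul_add_potential_shaping (hγ0 : 0 ≤ γ) (hγ1 : γ < 1) {B : ℝ}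
    {ρ φ : ℕ → ℝ} (hρ : ∀ t, |ρ t| ≤ C) (hφ : ∀ t, |φ t| ≤ B) :
    ∑' t, γ ^ t * (ρ t + γ * φ (t + 1) - φ t) = ∑' t, γ ^ t * ρ t - φ 0 := by
  set g : ℕ → ℝ := fun t => γ ^ t * φ t
  have hρs := summable_pow_mul_of_abs_le hγ0 hγ1 hρ
  have hgs : Summable g := summable_pow_mul_of_abs_le hγ0 hγ1 hφ
  have hgs' : Summable fun t => g (t + 1) := (summable_nat_add_iff 1).2 hgs
  have hterm : ∀ t, γ ^ t * (ρ t + γ * φ (t + 1) - φ t) = γ ^ t * ρ t + g (t + 1) - g t := by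
    intro t
    simp only [g, pow_succ]
    ring
  have hshift : ∑' t, g (t + 1) = ∑' t, g t - φ 0 := by
    rw [hgs.tsum_eq_zero_add]
    simp [g]
  rw [tsum_congr hterm, (hρs.add hgs').tsum_sub hgs, hρs.tsum_add hgs', hshift]
  ring

end Discounted

/-- Policy-invariance of potential-based shaping (Ng–Harada–Russell) for a
deterministic system: the optimal shaped value equals the optimal original
value shifted by `−Φ x`. -/
theorem stmt6 {S A : Type*} [Nonempty A] (T : S × A → S)
    (r : S × A → ℝ) (C : ℝ) (hr : ∀ p, |r p| ≤ C)
    (γ : ℝ) (hγ0 : 0 < γ) (hγ1 : γ < 1)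
    (Φ : S → ℝ) (B : ℝ) (hΦ : ∀ x, |Φ x| ≤ B) (x : S) :
    (⨆ a : ℕ → A, ∑' t, γ ^ t *
        (r (traj T x a t, a t) + γ * Φ (traj T x a (t + 1)) - Φ (traj T x a t)))
      = (⨆ a : ℕ → A, ∑' t, γ ^ t * r (traj T x a t, a t)) - Φ x := by
  have hbdd : BddAbove (Set.range fun a : ℕ → A => ∑' t, γ ^ t * r (traj T x a t, a t)) :=
    ⟨C / (1 - γ), Set.forall_mem_range.2 fun a =>
      tsum_pow_mul_le_of_abs_le hγ0.le hγ1 fun t => hr _⟩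
  rw [ciSup_sub hbdd]
  exact iSup_congr fun a =>
    tsum_pow_mul_add_potential_shaping hγ0.le hγ1 (fun t => hr _) (fun t => hΦ _)
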